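/- Suppose at least one suspicious type exists, and let u = ∑_{A_{−i} ∈ (X×Z)^{n−1}} min(1, B/(|G(A_{−i})| + 1)) · ∏_{j ≠ i} h(a_j) (a quantity independent of the agent i). Then the incentive to lie under the UNIFORM policy equals ε(UNIFORM) = max(0, 1 − (1 + c) · u). -/

import Mathlib

/-!
Threshold allocation model: `n` agents with types in `X × Z` (`X` verifiable,
`Z` self-reported), types drawn i.i.d. from a pmf `h`, score `f`, threshold `θ`,
audit budget `B`, penalty `c`.
-/

open Finset
open scoped Classical

noncomputable section

variable {X Z : Type*} [Fintype X] [Fintype Z] [Nonempty X] [Nonempty Z]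

/-- `h` is a probability mass function on `X × Z`. -/
def IsPmf (h : X × Z → ℝ) : Prop :=
  (∀ a, 0 ≤ h a) ∧ ∑ a : X × Z, h a = 1

/-- The `n`-agent profile obtained from the profile `am` of the agents other
than `i` by inserting `a` in slot `i` (denoted `A₋ᵢ ∪ᵢ {a}` in the paper). -/
def ins {n : ℕ} (i : Fin n) (am : {j : Fin n // j ≠ i} → X × Z) (a : X × Z) :
    Fin n → X × Z :=
  fun j => if hj : j = i then a else am ⟨j, hj⟩

/-- A report `a' = (x, z')` is suspicious: it has positive probability, scores at
or above the threshold, and some positive-probability type with the same `x`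
scores below the threshold. -/
def Suspicious (h f : X × Z → ℝ) (θ : ℝ) (a : X × Z) : Prop :=
  0 < h a ∧ θ ≤ f a ∧ ∃ z : Z, 0 < h (a.1, z) ∧ f (a.1, z) < θ

/-- `G A` is the set of indices of suspicious reports in the profile `A`. -/
def G {n : ℕ} (h f : X × Z → ℝ) (θ : ℝ) (A : Fin n → X × Z) : Finset (Fin n) :=
  univ.filter fun i => Suspicious h f θ (A i)

/-- An audit policy assigns to each profile a vector in `[0,1]^n` whose
suspicious coordinates sum to at most the budget `B`. -/
def IsAuditPolicy {n : ℕ} (h f : X × Z → ℝ) (θ B : ℝ)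
    (φ : (Fin n → X × Z) → Fin n → ℝ) : Prop :=
  ∀ A : Fin n → X × Z,
    (∀ i, φ A i ∈ Set.Icc (0 : ℝ) 1) ∧ ∑ i ∈ G h f θ A, φ A i ≤ B

/-- Expected gain of agent `i` with true type `a` reporting `a'` (when the others
report their true types, drawn i.i.d. from `h`), under audit policy `φ`. -/
def gain {n : ℕ} (h f : X × Z → ℝ) (θ c : ℝ)
    (φ : (Fin n → X × Z) → Fin n → ℝ) (i : Fin n) (a a' : X × Z) : ℝ :=
  if a' = a then 0
  else
    (∑ am : {j : Fin n // j ≠ i} → X × Z,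
        (∏ j, h (am j)) *
          ((if θ ≤ f a' then (1 : ℝ) else 0) * (1 - φ (ins i am a') i)
            - c * φ (ins i am a') i))
      - (if θ ≤ f a then (1 : ℝ) else 0)

/-- The incentive to lie under policy `φ`: the largest expected gain of any
misreport `a' = (x, z')` by any agent `i` with any true type `a = (x, z)` of
positive probability. -/
def eps {n : ℕ} (h f : X × Z → ℝ) (θ c : ℝ)
    (φ : (Fin n → X × Z) → Fin n → ℝ) : ℝ :=
  sSup {g : ℝ | ∃ (i : Fin n) (a : X × Z) (z' : Z),
    0 < h a ∧ g = gain h f θ c φ i a (a.1, z')}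

/-- The UNIFORM audit policy: audit each suspicious report with probability
`min 1 (B / |G(A)|)`, each sure-lie (`h (A i) = 0`) with probability `1`, and
everyone else with probability `0`. -/
def uniformPolicy {n : ℕ} (h f : X × Z → ℝ) (θ B : ℝ) :
    (Fin n → X × Z) → Fin n → ℝ :=
  fun A i =>
    if Suspicious h f θ (A i) then min 1 (B / ((G h f θ A).card : ℝ))
    else if h (A i) = 0 then 1 else 0

end

/-!
The reporter of a suspicious type is itself counted in `G`, so it is audited with probability
`min 1 (B / (|G(A₋ᵢ)| + 1))`, whose expectation over the other agents is `u`. Claiming a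
suspicious type from a true type below the threshold therefore gains `1 - (1 + c) u`; every other
misreport gains at most `0`: a report of probability zero is always audited, and a non-suspicious
report above the threshold with positive probability is only available to types that are above
the threshold already. Truth-telling gains `0`, so the supremum is attained.
-/

section

variable {X Z : Type*}

noncomputable def suspiciousAuditProb [Fintype X] [Fintype Z] (h f : X × Z → ℝ) (θ B : ℝ)
    (ι : Type*) [Fintype ι] [DecidableEq ι] : ℝ :=
  ∑ am : ι → X × Z,
    min 1 (B / (((univ.filter fun j : ι => Suspicious h f θ (am j)).card : ℝ) + 1)) *
      ∏ j, h (am j)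

theorem suspiciousAuditProb_congr [Fintype X] [Fintype Z] (h f : X × Z → ℝ) (θ B : ℝ)
    {ι κ : Type*} [Fintype ι] [DecidableEq ι] [Fintype κ] [DecidableEq κ] (e : ι ≃ κ) :
    suspiciousAuditProb h f θ B ι = suspiciousAuditProb h f θ B κ := by
  refine Fintype.sum_equiv (e.arrowCongr (Equiv.refl _)) _ _ fun am => ?_
  have hcard : (univ.filter fun j => Suspicious h f θ (am j)).card =
      (univ.filter fun k => Suspicious h f θ (am (e.symm k))).card := by
    simp only [card_filter]
    exact (e.symm.sum_comp _).symm
  rw [hcard, ← e.symm.prod_comp]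
  rfl

theorem suspiciousAuditProb_ne_eq [Fintype X] [Fintype Z] (h f : X × Z → ℝ) (θ B : ℝ)
    {n : ℕ} (i i' : Fin n) :
    suspiciousAuditProb h f θ B {j // j ≠ i} = suspiciousAuditProb h f θ B {j // j ≠ i'} :=
  suspiciousAuditProb_congr h f θ B (Fintype.equivOfCardEq (by simp [Fintype.card_subtype_compl]))

theorem IsPmf.sum_prod_mul [Fintype X] [Fintype Z] {ι : Type*} [Fintype ι] [DecidableEq ι]
    {h : X × Z → ℝ} (hpmf : IsPmf h) (k : ℝ) :
    ∑ am : ι → X × Z, (∏ j, h (am j)) * k = k := by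
  rw [← sum_mul, ← Fintype.prod_sum (fun _ a => h a), hpmf.2]
  simp

theorem ins_self {n : ℕ} (i : Fin n) (am : {j : Fin n // j ≠ i} → X × Z) (a : X × Z) :
    ins i am a i = a :=
  dif_pos rfl

theorem card_G_ins (h f : X × Z → ℝ) (θ : ℝ) {n : ℕ} {i : Fin n}
    (am : {j : Fin n // j ≠ i} → X × Z) {a : X × Z} (ha : Suspicious h f θ a) :
    (G h f θ (ins i am a)).card =
      (univ.filter fun j : {j : Fin n // j ≠ i} => Suspicious h f θ (am j)).card + 1 := by
  rw [G, card_filter, card_filter, Fintype.sum_eq_add_sum_subtype_ne _ i, ins_self, if_pos ha,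
    add_comm]
  congr 1
  refine sum_congr rfl fun j _ => ?_
  rw [ins, dif_neg j.2]

theorem uniformPolicy_ins_of_suspicious (h f : X × Z → ℝ) (θ B : ℝ) {n : ℕ} {i : Fin n}
    (am : {j : Fin n // j ≠ i} → X × Z) {a : X × Z} (ha : Suspicious h f θ a) :
    uniformPolicy h f θ B (ins i am a) i =
      min 1 (B / (((univ.filter fun j : {j : Fin n // j ≠ i} =>
        Suspicious h f θ (am j)).card : ℝ) + 1)) := by
  rw [uniformPolicy, ins_self, if_pos ha, card_G_ins h f θ am ha, Nat.cast_succ]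

theorem uniformPolicy_ins_of_not_suspicious (h f : X × Z → ℝ) (θ B : ℝ) {n : ℕ} {i : Fin n}
    (am : {j : Fin n // j ≠ i} → X × Z) {a : X × Z} (ha : ¬Suspicious h f θ a) :
    uniformPolicy h f θ B (ins i am a) i = if h a = 0 then 1 else 0 := by
  rw [uniformPolicy, ins_self, if_neg ha]

section Gain

variable [Fintype X] [Fintype Z] {h : X × Z → ℝ} (f : X × Z → ℝ) (θ B c : ℝ) {n : ℕ}

theorem gain_uniformPolicy_of_suspicious (hpmf : IsPmf h) (i : Fin n) {a a' : X × Z}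
    (hne : a' ≠ a) (ha' : Suspicious h f θ a') :
    gain h f θ c (uniformPolicy h f θ B) i a a' =
      1 - (1 + c) * suspiciousAuditProb h f θ B {j // j ≠ i} - if θ ≤ f a then 1 else 0 := by
  rw [gain, if_neg hne, if_pos ha'.2.1]
  simp only [uniformPolicy_ins_of_suspicious h f θ B _ ha']
  have split (p q : ℝ) : q * (1 * (1 - p) - c * p) = q * 1 - (1 + c) * (p * q) := by ring
  simp_rw [split, sum_sub_distrib, ← mul_sum, hpmf.sum_prod_mul]
  rfl

theorem gain_uniformPolicy_of_not_suspicious (hpmf : IsPmf h) (i : Fin n) {a a' : X × Z}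
    (hne : a' ≠ a) (ha' : ¬Suspicious h f θ a') :
    gain h f θ c (uniformPolicy h f θ B) i a a' =
      (if θ ≤ f a' then 1 else 0) * (1 - if h a' = 0 then 1 else 0)
        - c * (if h a' = 0 then 1 else 0) - if θ ≤ f a then 1 else 0 := by
  rw [gain, if_neg hne]
  simp only [uniformPolicy_ins_of_not_suspicious h f θ B _ ha', hpmf.sum_prod_mul]

theorem gain_uniformPolicy_le (hpmf : IsPmf h) (hc : 0 ≤ c) (i : Fin n) {a : X × Z}
    (ha : 0 < h a) (z : Z) :
    gain h f θ c (uniformPolicy h f θ B) i a (a.1, z) ≤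
      max 0 (1 - (1 + c) * suspiciousAuditProb h f θ B {j // j ≠ i}) := by
  by_cases hne : (a.1, z) = a
  · rw [gain, if_pos hne]
    exact le_max_left _ _
  by_cases hs : Suspicious h f θ (a.1, z)
  · rw [gain_uniformPolicy_of_suspicious f θ B c hpmf i hne hs]
    refine le_trans ?_ (le_max_right _ _)
    split_ifs <;> linarith
  · rw [gain_uniformPolicy_of_not_suspicious f θ B c hpmf i hne hs]
    refine le_trans ?_ (le_max_left _ _)
    have hscore : θ ≤ f (a.1, z) → h (a.1, z) ≠ 0 → θ ≤ f a := fun hfz hz =>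
      not_lt.mp fun hfa => hs ⟨(hpmf.1 _).lt_of_ne' hz, hfz, a.2, ha, hfa⟩
    split_ifs with hfz hz hfa hfa <;> try linarith
    exact absurd (hscore hfz hz) hfa

theorem exists_gain_uniformPolicy_eq (hpmf : IsPmf h) {a' : X × Z} (hs : Suspicious h f θ a')
    (i : Fin n) :
    ∃ (a : X × Z) (z : Z), 0 < h a ∧
      gain h f θ c (uniformPolicy h f θ B) i a (a.1, z) =
        1 - (1 + c) * suspiciousAuditProb h f θ B {j // j ≠ i} := by
  obtain ⟨z, hz, hfz⟩ := hs.2.2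
  have hne : a' ≠ (a'.1, z) := fun heq => (heq ▸ hs.2.1).not_gt hfz
  refine ⟨(a'.1, z), a'.2, hz, ?_⟩
  rw [gain_uniformPolicy_of_suspicious f θ B c hpmf i hne hs, if_neg hfz.not_ge, sub_zero]

end Gain

variable [Fintype X] [Fintype Z] [Nonempty X] [Nonempty Z]

theorem eps_uniform_eq_general {n : ℕ}
    (h f : X × Z → ℝ) (θ B c : ℝ)
    (hpmf : IsPmf h) (hc : 0 ≤ c)
    (hex : ∃ a : X × Z, Suspicious h f θ a) (i : Fin n) :
    eps h f θ c (uniformPolicy (n := n) h f θ B) =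
      max 0 (1 - (1 + c) *
        ∑ am : {j : Fin n // j ≠ i} → X × Z,
          min 1 (B / (((univ.filter fun j : {j : Fin n // j ≠ i} =>
              Suspicious h f θ (am j)).card : ℝ) + 1)) *
            ∏ j, h (am j)) := by
  change _ = max 0 (1 - (1 + c) * suspiciousAuditProb h f θ B {j // j ≠ i})
  obtain ⟨a₀, ha₀⟩ := hex
  refine IsGreatest.csSup_eq ⟨?_, ?_⟩
  · rcases max_choice 0 (1 - (1 + c) * suspiciousAuditProb h f θ B {j // j ≠ i}) with hmax | hmax
    · rw [hmax]
      exact ⟨i, a₀, a₀.2, ha₀.1, (if_pos rfl).symm⟩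
    · obtain ⟨a, z, ha, hgain⟩ := exists_gain_uniformPolicy_eq f θ B c hpmf ha₀ i
      rw [hmax]
      exact ⟨i, a, z, ha, hgain.symm⟩
  · rintro g ⟨i', a, z, ha, rfl⟩
    rw [suspiciousAuditProb_ne_eq h f θ B i i']
    exact gain_uniformPolicy_le f θ B c hpmf hc i' ha z

/-- if a suspicious type exists then, writing `u` for the expected
uniform audit probability of a suspicious report (a quantity independent of the
agent `i`), the incentive to lie under UNIFORM is `max 0 (1 - (1 + c) * u)`. -/
theorem eps_uniform_eq {n : ℕ}
    (h f : X × Z → ℝ) (θ B c : ℝ)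
    (hpmf : IsPmf h) (hB : 0 ≤ B) (hc : 0 ≤ c)
    (hex : ∃ a : X × Z, Suspicious h f θ a) (i : Fin n) :
    eps h f θ c (uniformPolicy (n := n) h f θ B) =
      max 0 (1 - (1 + c) *
        ∑ am : {j : Fin n // j ≠ i} → X × Z,
          min 1 (B / (((univ.filter fun j : {j : Fin n // j ≠ i} =>
              Suspicious h f θ (am j)).card : ℝ) + 1)) *
            ∏ j, h (am j)) :=
  eps_uniform_eq_general h f θ B c hpmf hc hex i

end
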